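/- A sequence (i_n)_{n∈ℕ} of positive integers is the itinerary of some x ∈ [0,∞) with T^k(x) ∉ ℤ for all k ∈ ℕ (i.e. T^n(x) ∈ (i_n − 1, i_n) for all n) if and only if both of the following hold: (1) i_{n+1} ≤ 4^{ℓ(i_n)} + 1 for all n ∈ ℕ; (2) there is no n ∈ ℕ with i_{n+k} = 1 for all k ∈ ℕ, and there are no n ∈ ℕ and m ∈ ℤ⁺ with i_{n+k} = 4^{m+k} + 1 for all k ∈ ℕ. -/

import Mathlib

open Set Filter

noncomputable section

/-- `ell n = min {k ∈ ℤ⁺ : n ≤ 4^k}`. -/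
def ell (n : ℕ) : ℕ := sInf {k : ℕ | 1 ≤ k ∧ n ≤ 4 ^ k}

/-- The value of the map `T` at the nonnegative integer `n`:
`0` if `n` is even and `4 ^ ℓ(n) + 1` if `n` is odd. -/
def Tval (n : ℕ) : ℝ := if Even n then 0 else 4 ^ ell n + 1

/-- `T : [0,∞) → [0,∞)` is the unique continuous map which is affine on each
integer interval `[n-1, n]` and takes the value `Tval n` at every nonnegative
integer `n`.  This is expressed by linear interpolation on each `[n, n+1]`. -/
def IsT (T : ℝ → ℝ) : Prop :=
  ∀ n : ℕ, ∀ x ∈ Set.Icc (n : ℝ) (n + 1),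
    T x = ((n : ℝ) + 1 - x) * Tval n + (x - (n : ℝ)) * Tval (n + 1)

/-- `(x_k)` is a `δ`-pseudo orbit of `T` in `[0,∞)`. -/
def IsPseudoOrbit (T : ℝ → ℝ) (δ : ℝ) (x : ℕ → ℝ) : Prop :=
  (∀ k, 0 ≤ x k) ∧ ∀ k, |x (k + 1) - T (x k)| < δ

/-!
On `[i - 1, i]` the map `T` is affine with slope `±(4 ^ ℓ(i) + 1)` and maps the interval onto
`[0, 4 ^ ℓ(i) + 1]`, so condition (1) says precisely that the next interval of the itinerary is
covered. Necessity of (1) follows since the open interval is mapped into `(0, 4 ^ ℓ(i) + 1)`.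
Since every slope is at least `5`, two points with the same closed itinerary coincide; the excluded
tails are the closed itineraries of the integers `0` (a fixed point) and `4 ^ m + 1` (whose orbit
is `4 ^ (m + k) + 1`), so no open itinerary can have them. Conversely, by Cantor's intersection
theorem applied to the preimages of the intervals, (1) yields a point with the prescribed closed
itinerary. If its orbit hits an integer `j`, the next iterate is `0` (`j` even) or `4 ^ ℓ(j) + 1`
(`j` odd); in the first case the itinerary ends in `1`s, and in the second it is squeezed between
`4 ^ (m + k) + 1` and `4 ^ (m + k) + 2`, which together with (1) forces an excluded tail.
-/

section IterateCylinder

variable {X : Type*} {f : X → X} {I : ℕ → Set X}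

def iterateCylinder (f : X → X) (I : ℕ → Set X) (n : ℕ) : Set X :=
  {x | ∀ k ≤ n, f^[k] x ∈ I k}

lemma iterateCylinder_zero : iterateCylinder f I 0 = I 0 := by
  ext x
  simp [iterateCylinder]

lemma iterateCylinder_succ (n : ℕ) :
    iterateCylinder f I (n + 1) = I 0 ∩ f ⁻¹' iterateCylinder f (fun k => I (k + 1)) n := by
  ext x
  simp only [iterateCylinder, mem_ofPred_eq, mem_inter_iff, mem_preimage,
    ← Function.iterate_succ_apply]
  refine ⟨fun h => ⟨h 0 (Nat.zero_le _), fun k hk => h (k + 1) (by omega)⟩, fun h k hk => ?_⟩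
  rcases k with _ | k
  exacts [h.1, h.2 k (by omega)]

lemma isClosed_iterateCylinder [TopologicalSpace X] (hI : ∀ k, IsClosed (I k))
    (hf : ∀ k, ContinuousOn f (I k)) (n : ℕ) : IsClosed (iterateCylinder f I n) := by
  induction n generalizing I with
  | zero => rw [iterateCylinder_zero]; exact hI 0
  | succ n ih =>
    rw [iterateCylinder_succ]
    exact (hf 0).preimage_isClosed_of_isClosed (hI 0)
      (ih (fun k => hI (k + 1)) (fun k => hf (k + 1)))

lemma iterateCylinder_nonempty (hsurj : ∀ k, I (k + 1) ⊆ f '' I k) {n : ℕ}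
    (hne : (I n).Nonempty) : (iterateCylinder f I n).Nonempty := by
  induction n generalizing I with
  | zero => rwa [iterateCylinder_zero]
  | succ n ih =>
    obtain ⟨y, hy⟩ := ih (I := fun k => I (k + 1)) (fun k => hsurj (k + 1)) hne
    obtain ⟨x, hx, rfl⟩ := hsurj 0 (hy 0 (Nat.zero_le n))
    rw [iterateCylinder_succ]
    exact ⟨x, hx, hy⟩

theorem exists_forall_iterate_mem [TopologicalSpace X] (hI : ∀ k, IsClosed (I k))
    (hI₀ : IsCompact (I 0)) (hf : ∀ k, ContinuousOn f (I k)) (hsurj : ∀ k, I (k + 1) ⊆ f '' I k)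
    (hne : ∀ k, (I k).Nonempty) : ∃ x, ∀ k, f^[k] x ∈ I k := by
  obtain ⟨x, hx⟩ := IsCompact.nonempty_iInter_of_sequence_nonempty_isCompact_isClosed
    (iterateCylinder f I) (fun _ _ hx k hk => hx k (by omega))
    (fun n => iterateCylinder_nonempty hsurj (hne n)) (by rwa [iterateCylinder_zero])
    (isClosed_iterateCylinder hI hf)
  exact ⟨x, fun k => mem_iInter.1 hx k k le_rfl⟩

end IterateCylinder

lemma natCast_mem_Icc_iff {i j : ℕ} : (j : ℝ) ∈ Icc ((i : ℝ) - 1) i ↔ i = j ∨ i = j + 1 := by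
  simp only [mem_Icc, sub_le_iff_le_add]
  constructor
  · rintro ⟨h₁, h₂⟩
    have : i ≤ j + 1 := by exact_mod_cast h₁
    have : j ≤ i := by exact_mod_cast h₂
    omega
  · rintro (rfl | rfl) <;> push_cast <;> constructor <;> linarith

lemma natCast_notMem_Ioo {i j : ℕ} : (j : ℝ) ∉ Ioo ((i : ℝ) - 1) i := by
  rintro ⟨h₁, h₂⟩
  have : i < j + 1 := by exact_mod_cast (by linarith : (i : ℝ) < j + 1)
  have : j < i := by exact_mod_cast h₂
  omega

lemma exists_natCast_of_mem_Icc_of_notMem_Ioo {i : ℕ} (hi : 1 ≤ i) {y : ℝ}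
    (hIcc : y ∈ Icc ((i : ℝ) - 1) i) (hIoo : y ∉ Ioo ((i : ℝ) - 1) i) : ∃ j : ℕ, y = j := by
  rcases hIcc.1.eq_or_lt with h | h
  · exact ⟨i - 1, by rw [← h, Nat.cast_sub hi, Nat.cast_one]⟩
  rcases hIcc.2.eq_or_lt with h' | h'
  · exact ⟨i, h'⟩
  · exact absurd ⟨h, h'⟩ hIoo

lemma ell_spec (n : ℕ) : 1 ≤ ell n ∧ n ≤ 4 ^ ell n :=
  Nat.sInf_mem (s := {k | 1 ≤ k ∧ n ≤ 4 ^ k}) ⟨max 1 n, le_max_left _ _,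
    (le_max_right 1 n).trans (Nat.lt_pow_self (by norm_num)).le⟩

lemma one_le_ell (n : ℕ) : 1 ≤ ell n := (ell_spec n).1

lemma le_pow_ell (n : ℕ) : n ≤ 4 ^ ell n := (ell_spec n).2

lemma ell_le {n k : ℕ} (hk : 1 ≤ k) (hn : n ≤ 4 ^ k) : ell n ≤ k := Nat.sInf_le ⟨hk, hn⟩

lemma ell_eq_of_lt_of_le {n k : ℕ} (hlo : 4 ^ k < n) (hhi : n ≤ 4 ^ (k + 1)) :
    ell n = k + 1 := by
  refine le_antisymm (ell_le k.succ_pos hhi) (Nat.succ_le_of_lt (lt_of_not_ge fun h => ?_))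
  exact (hlo.trans_le (le_pow_ell n)).not_ge (Nat.pow_le_pow_right (by norm_num) h)

lemma pow_add_two_le_pow_succ (k : ℕ) : 4 ^ k + 2 ≤ 4 ^ (k + 1) := by
  have := Nat.one_le_pow k 4 (by norm_num)
  rw [pow_succ]
  omega

lemma ell_pow_add_one (k : ℕ) : ell (4 ^ k + 1) = k + 1 :=
  ell_eq_of_lt_of_le (Nat.lt_succ_self _) ((Nat.le_succ _).trans (pow_add_two_le_pow_succ k))

lemma even_pow_ell (n : ℕ) : Even (4 ^ ell n) :=
  (Nat.even_pow' (Nat.one_le_iff_ne_zero.1 (one_le_ell n))).2 (by decide)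

/-- `4 ^ ell n` is even and `n` is odd, so `n < 4 ^ ell n`. -/
lemma ell_succ_of_odd {n : ℕ} (hn : Odd n) : ell (n + 1) = ell n := by
  refine le_antisymm (ell_le (one_le_ell n) ?_) (ell_le (one_le_ell _) ((Nat.le_succ n).trans
    (le_pow_ell _)))
  have hle := le_pow_ell n
  obtain ⟨a, ha⟩ := hn
  obtain ⟨b, hb⟩ := even_pow_ell n
  omega

lemma tail_eq_pow_add_one {i : ℕ → ℕ} (hc : ∀ n, i (n + 1) ≤ 4 ^ ell (i n) + 1) {n m : ℕ}
    (h : ∀ k, i (n + k) = 4 ^ (m + k) + 1 ∨ i (n + k) = 4 ^ (m + k) + 1 + 1) (k : ℕ) :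
    i (n + 1 + k) = 4 ^ (m + 1 + k) + 1 := by
  have hell : ell (i (n + k)) = m + k + 1 := by
    have := pow_add_two_le_pow_succ (m + k)
    have := h k
    exact ell_eq_of_lt_of_le (by omega) (by omega)
  have h₁ := hc (n + k)
  have h₂ := h (k + 1)
  rw [hell] at h₁
  rw [show n + (k + 1) = n + k + 1 by omega, show m + (k + 1) = m + k + 1 by omega] at h₂
  rw [show n + 1 + k = n + k + 1 by omega, show m + 1 + k = m + k + 1 by omega]
  omega

lemma Tval_of_even {n : ℕ} (hn : Even n) : Tval n = 0 := if_pos hn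

lemma Tval_of_odd {n : ℕ} (hn : Odd n) : Tval n = 4 ^ ell n + 1 :=
  if_neg (Nat.not_even_iff_odd.2 hn)

lemma Tval_sub_one_and_Tval {i : ℕ} (hi : 1 ≤ i) :
    Tval (i - 1) = 0 ∧ Tval i = 4 ^ ell i + 1 ∨
      Tval (i - 1) = 4 ^ ell i + 1 ∧ Tval i = 0 := by
  obtain ⟨n, rfl⟩ := Nat.exists_eq_add_of_le' hi
  rw [Nat.add_sub_cancel]
  rcases Nat.even_or_odd n with hn | hn
  · exact .inl ⟨Tval_of_even hn, Tval_of_odd hn.add_one⟩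
  · exact .inr ⟨by rw [Tval_of_odd hn, ell_succ_of_odd hn], Tval_of_even hn.add_one⟩

section IsT

variable {T : ℝ → ℝ}

lemma IsT.apply_natCast (hT : IsT T) (n : ℕ) : T n = Tval n := by
  rw [hT n n ⟨le_rfl, by linarith⟩]
  ring

lemma IsT.apply_eq (hT : IsT T) {i : ℕ} (hi : 1 ≤ i) {y : ℝ} (hy : y ∈ Icc ((i : ℝ) - 1) i) :
    T y = Tval (i - 1) + (Tval i - Tval (i - 1)) * (y - (i - 1)) := by
  obtain ⟨n, rfl⟩ := Nat.exists_eq_add_of_le' hi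
  simp only [Nat.add_sub_cancel, Nat.cast_add, Nat.cast_one, add_sub_cancel_right] at hy ⊢
  rw [hT n y hy]
  ring

lemma IsT.apply_sub_apply (hT : IsT T) {i : ℕ} (hi : 1 ≤ i) {y z : ℝ}
    (hy : y ∈ Icc ((i : ℝ) - 1) i) (hz : z ∈ Icc ((i : ℝ) - 1) i) :
    T y - T z = (Tval i - Tval (i - 1)) * (y - z) := by
  rw [hT.apply_eq hi hy, hT.apply_eq hi hz]
  ring

lemma IsT.five_mul_abs_sub_le (hT : IsT T) {i : ℕ} (hi : 1 ≤ i) {y z : ℝ}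
    (hy : y ∈ Icc ((i : ℝ) - 1) i) (hz : z ∈ Icc ((i : ℝ) - 1) i) :
    5 * |y - z| ≤ |T y - T z| := by
  have hslope : |Tval i - Tval (i - 1)| = 4 ^ ell i + 1 := by
    rcases Tval_sub_one_and_Tval hi with ⟨h₁, h₂⟩ | ⟨h₁, h₂⟩ <;> rw [h₁, h₂]
    · rw [sub_zero, abs_of_pos (by positivity)]
    · rw [zero_sub, abs_neg, abs_of_pos (by positivity)]
  have h4 : (4 : ℝ) ≤ 4 ^ ell i := le_self_pow₀ (by norm_num) (by have := one_le_ell i; omega)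
  rw [hT.apply_sub_apply hi hy hz, abs_mul, hslope]
  gcongr
  linarith

lemma IsT.continuousOn_Icc (hT : IsT T) {i : ℕ} (hi : 1 ≤ i) :
    ContinuousOn T (Icc ((i : ℝ) - 1) i) :=
  (by fun_prop : Continuous fun y : ℝ => Tval (i - 1) + (Tval i - Tval (i - 1)) * (y - (i - 1)))
    |>.continuousOn.congr fun _ hy => hT.apply_eq hi hy

lemma IsT.Icc_subset_image (hT : IsT T) {i : ℕ} (hi : 1 ≤ i) :
    Icc 0 ((4 : ℝ) ^ ell i + 1) ⊆ T '' Icc ((i : ℝ) - 1) i := by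
  have hle : (i : ℝ) - 1 ≤ i := by linarith
  have h := intermediate_value_uIcc (f := T) (a := (i : ℝ) - 1) (b := i)
    (by rw [uIcc_of_le hle]; exact hT.continuousOn_Icc hi)
  rw [uIcc_of_le hle, hT.apply_eq hi (left_mem_Icc.2 hle),
    hT.apply_eq hi (right_mem_Icc.2 hle)] at h
  refine (subset_of_eq ?_).trans h
  rcases Tval_sub_one_and_Tval hi with ⟨h₁, h₂⟩ | ⟨h₁, h₂⟩ <;> rw [h₁, h₂] <;> ring_nf
  · rw [uIcc_of_le (by positivity)]
  · rw [uIcc_of_ge (by positivity)]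

lemma IsT.apply_lt_of_mem_Ioo (hT : IsT T) {i : ℕ} (hi : 1 ≤ i) {y : ℝ}
    (hy : y ∈ Ioo ((i : ℝ) - 1) i) : T y < 4 ^ ell i + 1 := by
  rw [hT.apply_eq hi (Ioo_subset_Icc_self hy)]
  have hM : (0 : ℝ) < 4 ^ ell i + 1 := by positivity
  obtain ⟨hlo, hhi⟩ := hy
  rcases Tval_sub_one_and_Tval hi with ⟨h₁, h₂⟩ | ⟨h₁, h₂⟩ <;> rw [h₁, h₂] <;> nlinarith

lemma IsT.iterate_apply_zero (hT : IsT T) (k : ℕ) : T^[k] 0 = 0 :=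
  Function.iterate_fixed (by simpa [Tval_of_even Even.zero] using hT.apply_natCast 0) k

lemma IsT.apply_natCast_of_odd (hT : IsT T) {j : ℕ} (hj : Odd j) :
    T j = ((4 ^ ell j + 1 : ℕ) : ℝ) := by
  rw [hT.apply_natCast, Tval_of_odd hj]
  push_cast
  rfl

lemma IsT.iterate_pow_add_one (hT : IsT T) {m : ℕ} (hm : 1 ≤ m) (k : ℕ) :
    T^[k] ((4 ^ m + 1 : ℕ) : ℝ) = ((4 ^ (m + k) + 1 : ℕ) : ℝ) := by
  induction k generalizing m with
  | zero => rfl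
  | succ k ih =>
    have hodd : Odd (4 ^ m + 1) :=
      ((Nat.even_pow' (Nat.one_le_iff_ne_zero.1 hm)).2 (by decide)).add_one
    rw [Function.iterate_succ_apply, hT.apply_natCast_of_odd hodd, ell_pow_add_one, ih (by omega),
      Nat.add_right_comm]
    rfl

lemma IsT.pow_mul_abs_sub_le (hT : IsT T) {i : ℕ → ℕ} (hi : ∀ k, 1 ≤ i k) {x y : ℝ}
    (hx : ∀ k, T^[k] x ∈ Icc ((i k : ℝ) - 1) (i k))
    (hy : ∀ k, T^[k] y ∈ Icc ((i k : ℝ) - 1) (i k)) (k : ℕ) :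
    5 ^ k * |x - y| ≤ |T^[k] x - T^[k] y| := by
  induction k with
  | zero => simp
  | succ k ih =>
    rw [Function.iterate_succ_apply', Function.iterate_succ_apply', pow_succ', mul_assoc]
    calc 5 * (5 ^ k * |x - y|) ≤ 5 * |T^[k] x - T^[k] y| := by gcongr
      _ ≤ _ := hT.five_mul_abs_sub_le (hi k) (hx k) (hy k)

theorem IsT.eq_of_forall_iterate_mem_Icc (hT : IsT T) {i : ℕ → ℕ} (hi : ∀ k, 1 ≤ i k)
    {x y : ℝ} (hx : ∀ k, T^[k] x ∈ Icc ((i k : ℝ) - 1) (i k))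
    (hy : ∀ k, T^[k] y ∈ Icc ((i k : ℝ) - 1) (i k)) : x = y := by
  have hbound (k : ℕ) : 5 ^ k * |x - y| ≤ 1 :=
    (hT.pow_mul_abs_sub_le hi hx hy k).trans <| abs_sub_le_iff.2
      ⟨by linarith [(hx k).2, (hy k).1], by linarith [(hx k).1, (hy k).2]⟩
  by_contra hne
  have hpos : 0 < |x - y| := abs_pos.2 (sub_ne_zero.2 hne)
  obtain ⟨k, hk⟩ := pow_unbounded_of_one_lt |x - y|⁻¹ (by norm_num : (1 : ℝ) < 5)
  linarith [mul_lt_mul_of_pos_right hk hpos, inv_mul_cancel₀ hpos.ne', hbound k]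

lemma IsT.itinerary_succ_le (hT : IsT T) {i : ℕ → ℕ} (hi : ∀ k, 1 ≤ i k) {x : ℝ}
    (hx : ∀ n, T^[n] x ∈ Ioo ((i n : ℝ) - 1) (i n)) (n : ℕ) :
    i (n + 1) ≤ 4 ^ ell (i n) + 1 := by
  have h := hT.apply_lt_of_mem_Ioo (hi n) (hx n)
  rw [← Function.iterate_succ_apply' T n x] at h
  have : (i (n + 1) : ℝ) < 4 ^ ell (i n) + 1 + 1 := by linarith [(hx (n + 1)).1]
  exact Nat.lt_succ_iff.1 (by exact_mod_cast this)

lemma IsT.not_exists_tail_itinerary_natCast (hT : IsT T) {i : ℕ → ℕ} (hi : ∀ k, 1 ≤ i k)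
    {x : ℝ} (hx : ∀ n, T^[n] x ∈ Ioo ((i n : ℝ) - 1) (i n)) :
    ¬ ∃ n p : ℕ, ∀ k, T^[k] (p : ℝ) ∈ Icc ((i (n + k) : ℝ) - 1) (i (n + k)) := by
  rintro ⟨n, p, hp⟩
  have hshift (k : ℕ) : T^[k] (T^[n] x) ∈ Icc ((i (n + k) : ℝ) - 1) (i (n + k)) := by
    rw [← Function.iterate_add_apply, add_comm]
    exact Ioo_subset_Icc_self (hx _)
  exact natCast_notMem_Ioo (hT.eq_of_forall_iterate_mem_Icc (fun k => hi (n + k)) hshift hp ▸ hx n)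

lemma IsT.not_tail_eq_one (hT : IsT T) {i : ℕ → ℕ} (hi : ∀ k, 1 ≤ i k) {x : ℝ}
    (hx : ∀ n, T^[n] x ∈ Ioo ((i n : ℝ) - 1) (i n)) : ¬ ∃ n, ∀ k, i (n + k) = 1 := by
  rintro ⟨n, hn⟩
  refine hT.not_exists_tail_itinerary_natCast hi hx ⟨n, 0, fun k => ?_⟩
  rw [Nat.cast_zero, hT.iterate_apply_zero, ← Nat.cast_zero, natCast_mem_Icc_iff, hn]
  simp

lemma IsT.not_tail_eq_pow_add_one (hT : IsT T) {i : ℕ → ℕ} (hi : ∀ k, 1 ≤ i k) {x : ℝ}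
    (hx : ∀ n, T^[n] x ∈ Ioo ((i n : ℝ) - 1) (i n)) :
    ¬ ∃ n m, 1 ≤ m ∧ ∀ k, i (n + k) = 4 ^ (m + k) + 1 := by
  rintro ⟨n, m, hm, hnm⟩
  refine hT.not_exists_tail_itinerary_natCast hi hx ⟨n, 4 ^ m + 1, fun k => ?_⟩
  rw [hT.iterate_pow_add_one hm, natCast_mem_Icc_iff, hnm]
  simp

lemma IsT.exists_forall_iterate_mem_Icc (hT : IsT T) {i : ℕ → ℕ} (hi : ∀ k, 1 ≤ i k)
    (hc : ∀ n, i (n + 1) ≤ 4 ^ ell (i n) + 1) :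
    ∃ x, ∀ n, T^[n] x ∈ Icc ((i n : ℝ) - 1) (i n) := by
  refine exists_forall_iterate_mem (fun _ => isClosed_Icc) isCompact_Icc
    (fun n => hT.continuousOn_Icc (hi n)) (fun n => ?_) (fun n => nonempty_Icc.2 (by linarith))
  refine (Icc_subset_Icc ?_ ?_).trans (hT.Icc_subset_image (hi n))
  · linarith [(Nat.one_le_cast (α := ℝ)).2 (hi (n + 1))]
  · exact_mod_cast hc n

lemma IsT.iterate_mem_Ioo (hT : IsT T) {i : ℕ → ℕ} (hi : ∀ k, 1 ≤ i k)
    (hc : ∀ n, i (n + 1) ≤ 4 ^ ell (i n) + 1) (hone : ¬ ∃ n, ∀ k, i (n + k) = 1)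
    (hpow : ¬ ∃ n m, 1 ≤ m ∧ ∀ k, i (n + k) = 4 ^ (m + k) + 1) {x : ℝ}
    (hx : ∀ n, T^[n] x ∈ Icc ((i n : ℝ) - 1) (i n)) (n : ℕ) :
    T^[n] x ∈ Ioo ((i n : ℝ) - 1) (i n) := by
  by_contra hn
  obtain ⟨j, hj⟩ := exists_natCast_of_mem_Icc_of_notMem_Ioo (hi n) (hx n) hn
  have hshift (k : ℕ) : T^[k] (T j) ∈ Icc ((i (n + 1 + k) : ℝ) - 1) (i (n + 1 + k)) := by
    rw [← hj, ← Function.iterate_succ_apply' T, ← Function.iterate_add_apply, add_comm]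
    exact hx _
  rcases Nat.even_or_odd j with hj | hj
  · refine hone ⟨n + 1, fun k => ?_⟩
    have := hshift k
    rw [hT.apply_natCast, Tval_of_even hj, hT.iterate_apply_zero, ← Nat.cast_zero,
      natCast_mem_Icc_iff] at this
    have := hi (n + 1 + k)
    omega
  · refine hpow ⟨n + 1 + 1, ell j + 1, by omega, tail_eq_pow_add_one hc fun k => ?_⟩
    have := hshift k
    rwa [hT.apply_natCast_of_odd hj, hT.iterate_pow_add_one (one_le_ell j),
      natCast_mem_Icc_iff] at this

end IsT

/-- A sequence of positive integers `(i n)` is the itinerary of some point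
`x ∈ [0,∞)` whose orbit never hits an integer if and only if
(1) `i (n+1) ≤ 4 ^ ℓ(i n) + 1` for all `n`, and
(2) no tail of the sequence is constantly `1`, and no tail has the form
`4^{m+k} + 1` (k = 0, 1, 2, …) for some positive integer `m`. -/
theorem itinerary_characterization (T : ℝ → ℝ) (hT : IsT T)
    (i : ℕ → ℕ) (hpos : ∀ n : ℕ, 1 ≤ i n) :
    (∃ x : ℝ, 0 ≤ x ∧ ∀ n : ℕ, T^[n] x ∈ Set.Ioo ((i n : ℝ) - 1) (i n)) ↔
      ((∀ n : ℕ, i (n + 1) ≤ 4 ^ ell (i n) + 1) ∧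
        (¬ ∃ n : ℕ, ∀ k : ℕ, i (n + k) = 1) ∧
        ¬ ∃ n : ℕ, ∃ m : ℕ, 1 ≤ m ∧ ∀ k : ℕ, i (n + k) = 4 ^ (m + k) + 1) := by
  constructor
  · rintro ⟨x, -, hx⟩
    exact ⟨hT.itinerary_succ_le hpos hx, hT.not_tail_eq_one hpos hx,
      hT.not_tail_eq_pow_add_one hpos hx⟩
  · rintro ⟨hc, hone, hpow⟩
    obtain ⟨x, hx⟩ := hT.exists_forall_iterate_mem_Icc hpos hc
    have hopen := hT.iterate_mem_Ioo hpos hc hone hpow hx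
    refine ⟨x, ?_, hopen⟩
    have h₀ := (hopen 0).1
    have : (1 : ℝ) ≤ i 0 := Nat.one_le_cast.2 (hpos 0)
    rw [Function.iterate_zero_apply] at h₀
    linarith
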